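/- Let K be an even positive integer, let G be a K-edge-connected finite simple graph, and let T̃ be a spanning tree of G with congestion at most K. Let ℓ ≥ 3 and let Z_0, Z_1, ..., Z_{ℓ-1} be pairwise disjoint nonempty vertex sets whose union is V(G), with indices taken modulo ℓ, such that: each ∂Z_i is a K-cut of G that does not cross any K-cut of G; |∂Z_i ∩ ∂Z_{i+1}| = K/2 for every i; and ∂Z_i ∩ ∂Z_{i'} = ∅ whenever i and i' are not consecutive modulo ℓ. Then there is an index g and vertices w_g, w_{g+1}, ..., w_{g+ℓ-1} with w_i ∈ Z_i for i = g, ..., g+ℓ-1 (indices mod ℓ) such that: (i) for each i = g+1, ..., g+ℓ-3, T̃ ∩ ∂Z_i ∩ ∂Z_{i+1} consists exactly of the single edge (w_i, w_{i+1}); (ii) the edge (w_g, w_{g+1}) belongs to T̃ ∩ ∂Z_g ∩ ∂Z_{g+1} and every edge of T̃ ∩ ∂Z_g ∩ ∂Z_{g+1} is incident to w_{g+1}, and the edge (w_{g-2}, w_{g-1}) belongs to T̃ ∩ ∂Z_{g-1} ∩ ∂Z_{g-2} and every edge of T̃ ∩ ∂Z_{g-1} ∩ ∂Z_{g-2} is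 incident to w_{g-2}; and (iii) T̃ ∩ ∂Z_g ∩ ∂Z_{g-1} = ∅. -/

import Mathlib

open SimpleGraph

variable {V : Type*}

/-- The cut `∂X`: the set of edges of `G` with exactly one endpoint in `X`. -/
def cutEdges (G : SimpleGraph V) (X : Set V) : Set (Sym2 V) :=
  {e | e ∈ G.edgeSet ∧ ∃ u v, e = s(u, v) ∧ u ∈ X ∧ v ∉ X}

/-- `G` is `K`-edge-connected: at least two vertices, connected, and every cut has
at least `K` edges. -/
def KEdgeConnected (G : SimpleGraph V) (K : ℕ) : Prop :=
  Nontrivial V ∧ G.Connected ∧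
    ∀ X : Set V, X.Nonempty → X ≠ Set.univ → K ≤ (cutEdges G X).ncard

/-- `∂X` is a `K`-cut. -/
def IsKCut (G : SimpleGraph V) (K : ℕ) (X : Set V) : Prop :=
  X.Nonempty ∧ X ≠ Set.univ ∧ (cutEdges G X).ncard = K

/-- The cuts `∂X` and `∂Y` cross. -/
def Crossing (X Y : Set V) : Prop :=
  (X ∩ Y).Nonempty ∧ (X ∩ Yᶜ).Nonempty ∧ (Xᶜ ∩ Y).Nonempty ∧ (Xᶜ ∩ Yᶜ).Nonempty

/-- The set of vertices reachable from `u` in `T` after deleting the edge `e`;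
for a spanning tree `T` and an edge `e` of `T` with endpoint `u`, this is the shore
of the cut induced by `e` containing `u`. -/
def treeSide (T : SimpleGraph V) (u : V) (e : Sym2 V) : Set V :=
  {x | (T.deleteEdges {e}).Reachable u x}

/-- The congestion of the edge `(u,v)` of a spanning tree `T` of `G`. -/
noncomputable def edgeCong (G T : SimpleGraph V) (u v : V) : ℕ :=
  (cutEdges G (treeSide T u s(u, v))).ncard

/-- The spanning tree `T` of `G` has congestion at most `K`. -/
def CongAtMost (G T : SimpleGraph V) (K : ℕ) : Prop :=
  ∀ u v, T.Adj u v → edgeCong G T u v ≤ K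

/-- The congestion of a spanning tree `T` of `G`. -/
noncomputable def treeCongestion (G T : SimpleGraph V) : ℕ :=
  sSup {n | ∃ u v, T.Adj u v ∧ n = edgeCong G T u v}

/-- The spanning-tree congestion of `G`. -/
noncomputable def stc (G : SimpleGraph V) : ℕ :=
  sInf {n | ∃ T : SimpleGraph V, T ≤ G ∧ T.IsTree ∧ treeCongestion G T = n}

/-- `T_out(w,e)`: the vertex set of the component of the tree `H − e` not containing `w`
(the vertices of `H` that are no longer reachable from `w` after deleting `e`). -/
def treeOut (G : SimpleGraph V) (H : G.Subgraph) (w : V) (e : Sym2 V) : Set V :=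
  {x ∈ H.verts | ¬ (H.deleteEdges {e}).spanningCoe.Reachable w x}

/-- The rooted tree `(H, w)` is safe (with parameter `K`). -/
def SafeTree (G : SimpleGraph V) (K : ℕ) (H : G.Subgraph) (w : V) : Prop :=
  ∀ e ∈ H.edgeSet, (cutEdges G (treeOut G H w e)).ncard = K

/-- `V(∂X)`: the set of endpoints of edges of the cut `∂X`. -/
def cutVerts (G : SimpleGraph V) (X : Set V) : Set V :=
  {v | ∃ e ∈ cutEdges G X, v ∈ e}

/-- `w` is a hub for `Z`: `w ∈ V(∂Z)` and there is a spanning tree `H` of the subgraph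
of `G` induced by `Z ∪ {w}` such that `(H, w)` is a safe tree. -/
def IsHub (G : SimpleGraph V) (K : ℕ) (Z : Set V) (w : V) : Prop :=
  w ∈ cutVerts G Z ∧
    ∃ H : G.Subgraph, H.verts = Z ∪ {w} ∧ H.coe.IsTree ∧ SafeTree G K H w

/-- `H̃(Z)`: the set of all hubs for `Z`. -/
def hubSet (G : SimpleGraph V) (K : ℕ) (Z : Set V) : Set V :=
  {w | IsHub G K Z w}

/-- `N(S)`: the set of vertices adjacent in `G` to some vertex of `S`. -/
def nbrSet (G : SimpleGraph V) (S : Set V) : Set V :=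
  {v | ∃ u ∈ S, G.Adj u v}

/-- Edges of `∂X` with both endpoints in `S`. -/
def cutRestrict (G : SimpleGraph V) (X S : Set V) : Set (Sym2 V) :=
  {e ∈ cutEdges G X | ∀ v ∈ e, v ∈ S}

/-!
The fundamental cut of every tree edge has at most `K` edges by the congestion bound and at least
`K` by edge-connectivity, so it is a `K`-cut and crosses no block `Z i`. Tree edges join equal or
consecutive blocks, so along the tree the block index lifts to an integer height `h` changing by at
most one per edge. Since fundamental cuts do not cross the blocks, `h` cannot wind around the cycle:
normalised, it takes exactly the values `0, …, ℓ - 1`, level `t` being the block `Z (g + t)`, and no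
tree edge joins the top level to level `0`. On this path of levels, non-crossing forces all tree
edges leaving an interior level through a single vertex of it; these vertices form `w`.
-/

section TreeSide

variable {T : SimpleGraph V}

lemma mem_treeSide_self (u : V) (e : Sym2 V) : u ∈ treeSide T u e := Reachable.refl u

lemma mem_treeSide_of_adj {u x y : V} {e : Sym2 V} (hx : x ∈ treeSide T u e) (hxy : T.Adj x y)
    (he : s(x, y) ≠ e) : y ∈ treeSide T u e :=
  hx.trans (Adj.reachable ((deleteEdges_adj ..).mpr ⟨hxy, he⟩))

lemma mem_treeSide_of_mem_darts {a b : V} {p : T.Walk a b} (hp : p.IsPath)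
    {d : T.Dart} (hd : d ∈ p.darts) :
    a ∈ treeSide T d.fst d.edge ∧ b ∈ treeSide T d.snd d.edge := by
  induction p with
  | nil => simp at hd
  | @cons a z b haz p ih =>
    rw [Walk.cons_isPath_iff] at hp
    have hnot : s(a, z) ∉ p.edges := fun h => hp.2 (p.fst_mem_support_of_mem_edges h)
    rcases List.mem_cons.mp hd with rfl | hd
    · refine ⟨mem_treeSide_self _ _, ⟨p.toDeleteEdges {s(a, z)} ?_⟩⟩
      rintro e he rfl
      exact hnot he
    · obtain ⟨hz, hb⟩ := ih hp.1 hd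
      refine ⟨mem_treeSide_of_adj hz haz.symm fun h => hnot ?_, hb⟩
      rw [Sym2.eq_swap, h, Walk.edges_eq_map_darts]
      exact List.mem_map_of_mem hd

lemma notMem_treeSide (hT : T.IsTree) {x y : V} (hxy : T.Adj x y) :
    y ∉ treeSide T x s(x, y) :=
  isBridge_iff.mp (isAcyclic_iff_forall_adj_isBridge.mp hT.isAcyclic hxy)

lemma treeSide_swap_eq_compl (hT : T.IsTree) {x y : V} (hxy : T.Adj x y) :
    treeSide T y s(x, y) = (treeSide T x s(x, y))ᶜ := by
  classical
  ext v
  refine ⟨fun hy hx => notMem_treeSide hT hxy (hx.trans hy.symm), fun hx => ?_⟩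
  obtain ⟨p⟩ := hT.connected.preconnected x v
  by_cases he : s(x, y) ∈ p.bypass.edges
  · rw [Walk.edges_eq_map_darts] at he
    obtain ⟨⟨⟨a, b⟩, hab⟩, hd, hde⟩ := List.mem_map.mp he
    have hv := (mem_treeSide_of_mem_darts p.bypass_isPath hd).2
    simp only [Dart.edge_mk] at hde hv
    rcases Sym2.eq_iff.mp hde with ⟨rfl, rfl⟩ | ⟨rfl, rfl⟩
    · exact hv
    · exact absurd (by rwa [Sym2.eq_swap] at hv) hx
  · exact absurd ⟨p.bypass.toDeleteEdges {s(x, y)} (by rintro e he' rfl; exact he he')⟩ hx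

end TreeSide

section NonCrossing

variable {T : SimpleGraph V}

lemma subset_or_subset_of_not_crossing {Z S : Set V} (h : ¬ Crossing Z S) {a b : V}
    (haZ : a ∈ Z) (haS : a ∈ S) (hbZ : b ∉ Z) (hbS : b ∉ S) : S ⊆ Z ∨ Z ⊆ S := by
  by_contra! hne
  obtain ⟨c, hcS, hcZ⟩ := Set.not_subset.mp hne.1
  obtain ⟨d, hdZ, hdS⟩ := Set.not_subset.mp hne.2
  exact h ⟨⟨a, haZ, haS⟩, ⟨d, hdZ, hdS⟩, ⟨c, hcZ, hcS⟩, ⟨b, hbZ, hbS⟩⟩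

lemma crossing_treeSide (hT : T.IsTree) {x y : V} (hxy : T.Adj x y) {Z : Set V} {a b c d : V}
    (ha : a ∈ treeSide T x s(x, y)) (hb : b ∈ treeSide T x s(x, y))
    (hc : c ∈ treeSide T y s(x, y)) (hd : d ∈ treeSide T y s(x, y))
    (haZ : a ∈ Z) (hbZ : b ∉ Z) (hcZ : c ∈ Z) (hdZ : d ∉ Z) :
    Crossing Z (treeSide T x s(x, y)) := by
  rw [treeSide_swap_eq_compl hT hxy] at hc hd
  exact ⟨⟨a, haZ, ha⟩, ⟨c, hcZ, hc⟩, ⟨b, hbZ, hb⟩, ⟨d, hdZ, hd⟩⟩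

lemma eq_of_subset_treeSide (hT : T.IsTree) {Z : Set V}
    (hZ : ∀ x y, T.Adj x y → ¬ Crossing Z (treeSide T x s(x, y)))
    {x y : V} (hxy : T.Adj x y) (hx : x ∉ Z) (hy : y ∈ Z) (hsub : Z ⊆ treeSide T y s(x, y))
    {x' y' : V} (hxy' : T.Adj x' y') (hx' : x' ∉ Z) (hy' : y' ∈ Z) : y' = y := by
  classical
  by_contra hne
  -- The first edge `yz` of the path from `y` to `y'` separates `{x, y}` from `{x', y'}`.
  obtain ⟨p⟩ := hT.connected.preconnected y y'
  obtain ⟨d, hd, hdy, -⟩ :=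
    p.bypass.exists_boundary_dart {y} rfl (Set.mem_singleton_iff.not.mpr hne)
  have hy'z : y' ∈ treeSide T d.snd s(y, d.snd) :=
    hdy ▸ (mem_treeSide_of_mem_darts p.bypass_isPath hd).2
  have hyz : T.Adj y d.snd := hdy ▸ d.adj
  generalize d.snd = z at hy'z hyz
  have hzx : z ≠ x := by
    rintro rfl
    rw [Sym2.eq_swap] at hy'z
    exact (treeSide_swap_eq_compl hT hxy ▸ hsub hy') hy'z
  refine hZ y z hyz (crossing_treeSide hT hyz (mem_treeSide_self _ _)
    (mem_treeSide_of_adj (mem_treeSide_self _ _) hxy.symm ?_) hy'z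
    (mem_treeSide_of_adj hy'z hxy'.symm ?_) hy hx hy' hx')
  · exact fun h => hzx (Sym2.congr_right.mp h).symm
  · intro h
    rcases Sym2.eq_iff.mp h with ⟨h1, -⟩ | ⟨-, rfl⟩
    · exact hne h1
    · exact hx' hy

end NonCrossing

def edgesBetween (T : SimpleGraph V) (X Y : Set V) : Set (Sym2 V) :=
  {e | ∃ x ∈ X, ∃ y ∈ Y, T.Adj x y ∧ e = s(x, y)}

section Levels

variable {T : SimpleGraph V} {h : V → ℤ}

lemma exists_dart_climbing (hstep : ∀ u v, T.Adj u v → h v ≤ h u + 1) {u v : V}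
    (p : T.Walk u v) {k : ℤ} (hu : h u ≤ k) (hv : k < h v) :
    ∃ d ∈ p.darts, h d.fst = k ∧ h d.snd = k + 1 := by
  obtain ⟨d, hd, h1, h2⟩ := p.exists_boundary_dart {w | h w ≤ k} hu (not_le.mpr hv)
  have := hstep _ _ d.adj
  have := hstep _ _ d.adj.symm
  simp only [Set.mem_ofPred_eq, not_le] at h1 h2
  exact ⟨d, hd, by omega, by omega⟩

variable (hT : T.IsTree) (hstep : ∀ u v, T.Adj u v → h v ≤ h u + 1)
  (hnc : ∀ k x y, T.Adj x y → ¬ Crossing {v | h v = k} (treeSide T x s(x, y)))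
include hT hstep hnc

lemma level_subset_treeSide {p q c : V} (hpq : T.Adj p q) (hq : h q = h p + 1)
    (hc : h c = h q + 1) : {v | h v = h q} ⊆ treeSide T q s(p, q) := by
  classical
  have hncq : ¬ Crossing {v | h v = h q} (treeSide T q s(p, q)) := by
    rw [Sym2.eq_swap]; exact hnc _ q p hpq.symm
  have hpq' : p ∉ treeSide T q s(p, q) := by
    rw [Sym2.eq_swap]; exact notMem_treeSide hT hpq.symm
  refine (subset_or_subset_of_not_crossing hncq rfl (mem_treeSide_self _ _)
    (show h p ≠ h q by omega) hpq').resolve_left fun hsub => ?_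
  -- If the side of `q` stays in level `h q`, the path from `p` up to `c` leaves level `h p` by an
  -- edge other than `pq`, and the cut of that edge crosses level `h q`.
  obtain ⟨P⟩ := hT.connected.preconnected p c
  obtain ⟨d, hd, hd1, hd2⟩ := exists_dart_climbing hstep P.bypass (k := h p) le_rfl (by omega)
  obtain ⟨hpd, hcd⟩ := mem_treeSide_of_mem_darts P.bypass_isPath hd
  by_cases he : s(p, q) = d.edge
  · have hdq : d.snd = q := by
      rcases Sym2.eq_iff.mp he with ⟨-, h2⟩ | ⟨-, h2⟩
      · exact h2.symm
      · rw [← h2] at hd1; omega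
    rw [← he, hdq] at hcd
    have := hsub hcd
    simp only [Set.mem_ofPred_eq] at this
    omega
  · exact hnc (h q) d.fst d.snd d.adj (crossing_treeSide hT d.adj
      (mem_treeSide_of_adj hpd hpq he) (mem_treeSide_self _ _) (mem_treeSide_self _ _) hcd
      rfl (by simp only [Set.mem_ofPred_eq]; omega) (by simp only [Set.mem_ofPred_eq]; omega)
      (by simp only [Set.mem_ofPred_eq]; omega))

lemma eq_of_adj_of_level_between {a c : V} {k : ℤ} (ha : h a + 1 = k) (hc : h c = k + 1)
    {x y x' y' : V} (hxy : T.Adj x y) (hx : h x ≠ k) (hy : h y = k)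
    (hxy' : T.Adj x' y') (hx' : h x' ≠ k) (hy' : h y' = k) : y = y' := by
  classical
  obtain ⟨P⟩ := hT.connected.preconnected a c
  obtain ⟨d, -, hd1, hd2⟩ := exists_dart_climbing hstep P.bypass (k := h a) le_rfl (by omega)
  have hsub : {v | h v = k} ⊆ treeSide T d.snd s(d.fst, d.snd) := by
    have := level_subset_treeSide hT hstep hnc d.adj (by omega) (c := c) (by omega)
    rwa [hd2, ha] at this
  have hd : h d.fst ≠ k := by omega
  have key := fun {x y : V} (hxy : T.Adj x y) (hx : h x ≠ k) (hy : h y = k) =>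
    eq_of_subset_treeSide hT (hnc k) d.adj hd (hd2.trans (by omega)) hsub hxy hx hy
  exact (key hxy hx hy).trans (key hxy' hx' hy').symm

variable {n : ℕ} (hn : 3 ≤ n) (hlev : ∀ k : ℕ, k < n → ∃ v, h v = k)
include hn hlev

lemma exists_chain :
    ∃ W : ℕ → V, (∀ k < n, h (W k) = k) ∧ (∀ k, k + 1 < n → T.Adj (W k) (W (k + 1))) ∧
      ∀ k, 0 < k → k + 1 < n → ∀ x y, T.Adj x y → h x ≠ k → h y = k → y = W k := by
  obtain ⟨v₀, -⟩ := hlev 0 (by omega)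
  have hedge : ∀ k : ℕ, ∃ x y : V, k + 1 < n → T.Adj x y ∧ h x = k ∧ h y = k + 1 := by
    intro k
    by_cases hk : k + 1 < n
    · obtain ⟨a, ha⟩ := hlev k (by omega)
      obtain ⟨c, hc⟩ := hlev (k + 1) hk
      obtain ⟨P⟩ := hT.connected.preconnected a c
      obtain ⟨d, -, hd⟩ := exists_dart_climbing hstep P ha.le (by omega)
      exact ⟨d.fst, d.snd, fun _ => ⟨d.adj, hd⟩⟩
    · exact ⟨v₀, v₀, fun hk' => absurd hk' hk⟩
  choose X Y hXY using hedge
  have hsame : ∀ k : ℕ, 0 < k → k + 1 < n → ∀ {x y x' y'}, T.Adj x y → h x ≠ k → h y = k →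
      T.Adj x' y' → h x' ≠ k → h y' = k → y = y' := by
    intro k hk hkn x y x' y'
    obtain ⟨a, ha⟩ := hlev (k - 1) (by omega)
    obtain ⟨c, hc⟩ := hlev (k + 1) hkn
    exact eq_of_adj_of_level_between hT hstep hnc (a := a) (c := c) (by omega) (by omega)
  refine ⟨fun k => if k + 1 < n then X k else Y (k - 1), fun k hk => ?_, fun k hk => ?_,
    fun k hk hkn x y hxy hx hy => ?_⟩
  · by_cases hk' : k + 1 < n
    · simp only [hk', if_true, (hXY k hk').2.1]
    · simp only [hk', if_false, (hXY (k - 1) (by omega)).2.2]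
      omega
  · obtain ⟨hXYk, hXk, hYk⟩ := hXY k hk
    by_cases hk' : k + 1 + 1 < n
    · simp only [hk, hk', if_true]
      obtain ⟨hXYk', hXk', hYk'⟩ := hXY (k + 1) hk'
      rwa [← hsame (k + 1) (by omega) hk' hXYk (by omega) (by omega) hXYk'.symm (by omega)
        (by omega)]
    · simp only [hk, hk', if_true, if_false, Nat.add_sub_cancel]
      exact hXYk
  · obtain ⟨hXYk, hXk, hYk⟩ := hXY k hkn
    simp only [hkn, if_true]
    exact hsame k hk hkn hxy hx hy hXYk.symm (by omega) hXk

lemma exists_linear_traversal :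
    ∃ W : ℕ → V, (∀ k < n, h (W k) = k) ∧
      (∀ k : ℕ, 0 < k → k + 2 < n →
        edgesBetween T {v | h v = k} {v | h v = k + 1} = {s(W k, W (k + 1))}) ∧
      (s(W 0, W 1) ∈ edgesBetween T {v | h v = 0} {v | h v = 1} ∧
        ∀ e ∈ edgesBetween T {v | h v = 0} {v | h v = 1}, W 1 ∈ e) ∧
      (s(W (n - 2), W (n - 1)) ∈
          edgesBetween T {v | h v = ↑(n - 2)} {v | h v = ↑(n - 2) + 1} ∧
        ∀ e ∈ edgesBetween T {v | h v = ↑(n - 2)} {v | h v = ↑(n - 2) + 1}, W (n - 2) ∈ e) := by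
  obtain ⟨W, hlevW, hadj, hhub⟩ := exists_chain hT hstep hnc hn hlev
  have hmem : ∀ k : ℕ, k + 1 < n →
      s(W k, W (k + 1)) ∈ edgesBetween T {v | h v = k} {v | h v = k + 1} :=
    fun k hk => ⟨_, hlevW k (by omega), _, by simp [hlevW (k + 1) hk], hadj k hk, rfl⟩
  have hlow : ∀ k : ℕ, 0 < k → k + 1 < n →
      ∀ e ∈ edgesBetween T {v | h v = k} {v | h v = k + 1}, W k ∈ e := by
    rintro k hk0 hk e ⟨x, hx, y, hy, hxy, rfl⟩
    rw [hhub k hk0 hk y x hxy.symm (by simp_all) hx]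
    exact Sym2.mem_mk_left _ _
  have hupp : ∀ k : ℕ, k + 2 < n →
      ∀ e ∈ edgesBetween T {v | h v = k} {v | h v = k + 1}, W (k + 1) ∈ e := by
    rintro k hk e ⟨x, hx, y, hy, hxy, rfl⟩
    rw [hhub (k + 1) (by omega) (by omega) x y hxy (by simp_all) (by simp_all)]
    exact Sym2.mem_mk_right _ _
  refine ⟨W, hlevW, fun k hk0 hk => ?_, ⟨hmem 0 (by omega), hupp 0 (by omega)⟩, ?_⟩
  · ext e
    refine ⟨fun he => ?_, fun he => (Set.mem_singleton_iff.mp he) ▸ hmem k (by omega)⟩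
    have hne : W k ≠ W (k + 1) := fun heq => by
      have := hlevW k (by omega)
      rw [heq, hlevW (k + 1) (by omega)] at this
      omega
    exact (Sym2.mem_and_mem_iff hne).mp ⟨hlow k hk0 (by omega) e he, hupp k hk e he⟩
  · rw [show n - 1 = n - 2 + 1 by omega]
    exact ⟨hmem (n - 2) (by omega), hlow (n - 2) (by omega) (by omega)⟩

end Levels

section Lift

variable {T : SimpleGraph V}

lemma exists_potential (hT : T.IsTree) {A : Type*} [AddCommGroup A] (c : T.Dart → A)
    (hc : ∀ d, c d.symm = -c d) : ∃ φ : V → A, ∀ d : T.Dart, φ d.snd = φ d.fst + c d := by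
  classical
  obtain ⟨r⟩ := hT.connected.nonempty
  choose P hP using fun v => (hT.existsUnique_path r v).exists
  -- Sum `c` along the path from `r`; of two adjacent vertices, one path extends the other.
  refine ⟨fun v => ((P v).darts.map c).sum, fun ⟨⟨u, v⟩, huv⟩ => ?_⟩
  by_cases hu : u ∈ (P v).support
  · simp [hT.isAcyclic.path_concat (hP u) (hP v) huv hu, Walk.darts_concat]
  · have hv := hT.isAcyclic.mem_support_of_ne_mem_support_of_adj_of_isPath (hP u) (hP v) huv hu
    have := hc ⟨(u, v), huv⟩
    simp only [Dart.symm_mk, Prod.swap_prod_mk] at this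
    simp [hT.isAcyclic.path_concat (hP v) (hP u) huv.symm hv, Walk.darts_concat, this]

lemma exists_int_lift (hT : T.IsTree) {n : ℕ} (hn : 3 ≤ n) (β : V → ZMod n)
    (hβ : ∀ u v, T.Adj u v → β v = β u ∨ β v = β u + 1 ∨ β u = β v + 1) :
    ∃ φ : V → ℤ, (∀ v, (φ v : ZMod n) = β v) ∧ ∀ u v, T.Adj u v → φ v ≤ φ u + 1 := by
  classical
  have h2 : (2 : ZMod n) ≠ 0 := by
    rw [← Nat.cast_two, Ne, ZMod.natCast_eq_zero_iff]
    exact fun h => by have := Nat.le_of_dvd two_pos h; omega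
  -- The step of a dart in `{-1, 0, 1}`; it is antisymmetric because `1 ≠ -1` in `ZMod n`.
  let c : T.Dart → ℤ := fun d =>
    if β d.snd = β d.fst + 1 then 1 else if β d.fst = β d.snd + 1 then -1 else 0
  have hc : ∀ d, c d.symm = -c d := by
    intro d
    simp only [c, Dart.symm_toProd, Prod.fst_swap, Prod.snd_swap]
    split_ifs <;> grind
  obtain ⟨φ, hφ⟩ := exists_potential hT c hc
  have hψ : ∀ u v, T.Adj u v → (φ u : ZMod n) - β u = φ v - β v := by
    intro u v huv
    have hcd : ((c ⟨(u, v), huv⟩ : ℤ) : ZMod n) = β v - β u := by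
      simp only [c]
      rcases hβ u v huv with h | h | h <;> split_ifs <;> push_cast <;> grind
    rw [hφ ⟨(u, v), huv⟩]
    push_cast
    rw [hcd]
    ring
  obtain ⟨r⟩ := hT.connected.nonempty
  have hconst : ∀ v, (φ v : ZMod n) - β v = φ r - β r := by
    intro v
    obtain ⟨p⟩ := hT.connected.preconnected v r
    induction p with
    | nil => rfl
    | cons huv _ ih => exact (hψ _ _ huv).trans ih
  refine ⟨fun v => φ v - φ r + ZMod.cast (β r), fun v => ?_, fun u v huv => ?_⟩
  · push_cast [ZMod.intCast_zmod_cast]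
    linear_combination hconst v
  · have hle : c ⟨(u, v), huv⟩ ≤ 1 := by
      simp only [c]
      split_ifs <;> norm_num
    have := hφ ⟨(u, v), huv⟩
    dsimp only at this ⊢
    omega

end Lift

section Cycle

variable {G T : SimpleGraph V} {ℓ : ℕ} {Z : ZMod ℓ → Set V}

lemma isKCut_treeSide {K : ℕ} (hG : KEdgeConnected G K) (hT : T.IsTree)
    (hcong : CongAtMost G T K) {x y : V} (hxy : T.Adj x y) :
    IsKCut G K (treeSide T x s(x, y)) := by
  have hne : treeSide T x s(x, y) ≠ Set.univ :=
    fun h => notMem_treeSide hT hxy (h ▸ Set.mem_univ y)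
  exact ⟨⟨x, mem_treeSide_self _ _⟩, hne,
    le_antisymm (hcong x y hxy) (hG.2.2 _ ⟨x, mem_treeSide_self _ _⟩ hne)⟩

lemma edgeSet_inter_cutEdges_inter_cutEdges (hTG : T ≤ G) {X Y : Set V} (hXY : Disjoint X Y) :
    T.edgeSet ∩ cutEdges G X ∩ cutEdges G Y = edgesBetween T X Y := by
  ext e
  constructor
  · rintro ⟨⟨he, -, x, y, rfl, hx, hy⟩, -, a, b, hab, ha, hb⟩
    rcases Sym2.eq_iff.mp hab with ⟨rfl, rfl⟩ | ⟨rfl, rfl⟩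
    · exact absurd ha (Set.disjoint_left.mp hXY hx)
    · exact ⟨x, hx, y, ha, he, rfl⟩
  · rintro ⟨x, hx, y, hy, hxy, rfl⟩
    exact ⟨⟨hxy, hTG hxy, x, y, rfl, hx, Set.disjoint_right.mp hXY hy⟩, hTG hxy, y, x,
      Sym2.eq_swap, hy, Set.disjoint_left.mp hXY hx⟩

lemma eq_or_eq_add_one_of_adj (hdisj : ∀ i j, i ≠ j → Disjoint (Z i) (Z j))
    (hfar : ∀ i i' : ZMod ℓ, i' ≠ i → i' ≠ i + 1 → i' ≠ i - 1 →
      cutEdges G (Z i) ∩ cutEdges G (Z i') = ∅)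
    {u v : V} (huv : G.Adj u v) {i j : ZMod ℓ} (hu : u ∈ Z i) (hv : v ∈ Z j) :
    j = i ∨ j = i + 1 ∨ i = j + 1 := by
  by_contra! hne
  have hX : ∀ {w : V} {k k' : ZMod ℓ}, k ≠ k' → w ∈ Z k → w ∉ Z k' :=
    fun hk hw => Set.disjoint_left.mp (hdisj _ _ hk) hw
  have hmem : s(u, v) ∈ cutEdges G (Z i) ∩ cutEdges G (Z j) :=
    ⟨⟨huv, u, v, rfl, hu, hX hne.1 hv⟩, ⟨huv, v, u, Sym2.eq_swap, hv, hX (Ne.symm hne.1) hu⟩⟩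
  rwa [hfar i j hne.1 hne.2.1 fun h => hne.2.2 (by rw [h]; ring)] at hmem

lemma eq_of_intCast_eq {a b : ℤ} (hab : a ≤ b) (hba : b < a + ℓ) (h : (a : ZMod ℓ) = b) :
    a = b := by
  have := Int.eq_zero_of_dvd_of_nonneg_of_lt (by omega) (by omega)
    ((ZMod.intCast_eq_intCast_iff_dvd_sub a b ℓ).mp h)
  omega

variable (hT : T.IsTree) (hℓ : 3 ≤ ℓ) (hdisj : ∀ i j, i ≠ j → Disjoint (Z i) (Z j))
  (hnc : ∀ i x y, T.Adj x y → ¬ Crossing (Z i) (treeSide T x s(x, y)))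
include hT hℓ hdisj hnc

lemma lt_add_of_lift {φ : V → ℤ} (hφ : ∀ v, v ∈ Z (φ v))
    (hstep : ∀ u v, T.Adj u v → φ v ≤ φ u + 1) (u v : V) : φ v < φ u + ℓ := by
  classical
  by_contra! hle
  -- The path from `u` to a vertex of height `φ u + ℓ` joins two vertices of one block, and its
  -- edge from height `φ u + 1` to `φ u + 2` separates them.
  obtain ⟨p⟩ := hT.connected.preconnected u v
  obtain ⟨d, -, -, hd⟩ := exists_dart_climbing hstep p (k := φ u + ℓ - 1) (by omega) (by omega)
  obtain ⟨q⟩ := hT.connected.preconnected u d.snd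
  obtain ⟨e, he, he1, he2⟩ := exists_dart_climbing hstep q.bypass (k := φ u + 1) (by omega)
    (by omega)
  obtain ⟨hu, hv⟩ := mem_treeSide_of_mem_darts q.bypass_isPath he
  have hout : ∀ {w : V} {c : ℤ}, φ w = φ u + c → 0 < c → c < ℓ → w ∉ Z (φ u) := by
    intro w c hw hc0 hcℓ hwZ
    refine Set.disjoint_left.mp (hdisj _ _ fun h => ?_) (hφ w) hwZ
    have := eq_of_intCast_eq (by omega) (by omega) h.symm
    omega
  have hdZ : d.snd ∈ Z (φ u) := by
    have := hφ d.snd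
    rwa [hd, show φ u + ℓ - 1 + 1 = φ u + ℓ by ring, Int.cast_add, Int.cast_natCast,
      ZMod.natCast_self, add_zero] at this
  exact hnc (φ u) e.fst e.snd e.adj (crossing_treeSide hT e.adj hu (mem_treeSide_self _ _) hv
    (mem_treeSide_self _ _) (hφ u) (hout he1 one_pos (by omega)) hdZ
    (hout (c := 2) (by omega) two_pos (by omega)))

lemma exists_levels (hunion : (⋃ i, Z i) = Set.univ)
    (hadj : ∀ u v, T.Adj u v → ∀ i j, u ∈ Z i → v ∈ Z j → j = i ∨ j = i + 1 ∨ i = j + 1) :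
    ∃ (g : ZMod ℓ) (h : V → ℤ), (∀ v, 0 ≤ h v ∧ h v < ℓ) ∧ (∀ v, v ∈ Z (g + h v)) ∧
      ∀ u v, T.Adj u v → h v ≤ h u + 1 := by
  choose β hβ using fun v => Set.mem_iUnion.mp (hunion ▸ Set.mem_univ v)
  obtain ⟨φ, hφβ, hstep⟩ :=
    exists_int_lift hT hℓ β fun u v huv => hadj u v huv _ _ (hβ u) (hβ v)
  have hφ : ∀ v, v ∈ Z (φ v) := fun v => (hφβ v).symm ▸ hβ v
  have hspan := lt_add_of_lift hT hℓ hdisj hnc hφ hstep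
  obtain ⟨v₀⟩ := hT.connected.nonempty
  obtain ⟨_, ⟨u₀, rfl⟩, hmin⟩ := Int.exists_least_of_bdd (P := fun z => ∃ v, φ v = z)
    ⟨φ v₀ - ℓ, by rintro _ ⟨v, rfl⟩; have := hspan v v₀; omega⟩ ⟨_, v₀, rfl⟩
  refine ⟨φ u₀, fun v => φ v - φ u₀, fun v => ⟨?_, ?_⟩, fun v => ?_, fun u v huv => ?_⟩
  · linarith [hmin _ ⟨v, rfl⟩]
  · linarith [hspan u₀ v]
  · simpa using hφ v
  · linarith [hstep u v huv]

end Cycle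

lemma sub_eq_add_natCast_sub {ℓ k : ℕ} (hk : k ≤ ℓ) (g : ZMod ℓ) : g - k = g + ↑(ℓ - k) := by
  rw [Nat.cast_sub hk, ZMod.natCast_self]
  ring

lemma exists_eq_add_natCast_of_ne {ℓ : ℕ} [NeZero ℓ] {g i : ZMod ℓ} (h0 : i ≠ g)
    (h1 : i ≠ g - 1) (h2 : i ≠ g - 2) : ∃ t : ℕ, i = g + t ∧ 0 < t ∧ t + 2 < ℓ := by
  have hval := ZMod.val_lt (i - g)
  have hcast : ∀ {k : ℕ}, (i - g).val + k = ℓ → i = g - k := fun h => by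
    rw [← Nat.sub_eq_of_eq_add' h.symm, Nat.cast_sub hval.le, ZMod.natCast_self,
      ZMod.natCast_zmod_val]
    ring
  have hne1 : (i - g).val + 1 ≠ ℓ := fun h => h1 (by exact_mod_cast hcast h)
  have hne2 : (i - g).val + 2 ≠ ℓ := fun h => h2 (by exact_mod_cast hcast h)
  refine ⟨(i - g).val, by simp, Nat.pos_of_ne_zero fun h => h0 ?_, by omega⟩
  rwa [ZMod.val_eq_zero, sub_eq_zero] at h

section CycleLevels

variable {T : SimpleGraph V} {ℓ : ℕ} {Z : ZMod ℓ → Set V} {g : ZMod ℓ} {h : V → ℤ}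
  (hdisj : ∀ i j, i ≠ j → Disjoint (Z i) (Z j)) (hrange : ∀ v, 0 ≤ h v ∧ h v < ℓ)
  (hmemZ : ∀ v, v ∈ Z (g + h v))
include hdisj hrange hmemZ

lemma block_eq_level {i : ZMod ℓ} {t : ℕ} (hi : i = g + t) (ht : t < ℓ) :
    Z i = {v | h v = t} := by
  ext v
  refine ⟨fun hv => ?_, fun hv => ?_⟩
  · have hblock : g + h v = i := by
      by_contra hne
      exact Set.disjoint_left.mp (hdisj _ _ hne) (hmemZ v) hv
    rw [hi, add_right_inj, ← Int.cast_natCast, ZMod.intCast_eq_intCast_iff'] at hblock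
    rwa [Int.emod_eq_of_lt (hrange v).1 (hrange v).2,
      Int.emod_eq_of_lt (by omega) (by omega)] at hblock
  · have := hmemZ v
    rwa [hv, Int.cast_natCast, ← hi] at this

lemma not_crossing_level (hnc : ∀ i x y, T.Adj x y → ¬ Crossing (Z i) (treeSide T x s(x, y)))
    (k : ℤ) {x y : V} (hxy : T.Adj x y) : ¬ Crossing {v | h v = k} (treeSide T x s(x, y)) := by
  rintro hcr
  obtain ⟨a, rfl, -⟩ := hcr.1
  refine hnc (g + (h a).toNat) x y hxy ?_
  have := hrange a
  rwa [block_eq_level hdisj hrange hmemZ rfl (by omega), Int.toNat_of_nonneg this.1]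

variable {G : SimpleGraph V} (hTG : T ≤ G)
include hTG

lemma edgeSet_inter_cutEdges_eq_edgesBetween_level {i : ZMod ℓ} {t : ℕ} (hi : i = g + t)
    (ht : t + 1 < ℓ) :
    T.edgeSet ∩ cutEdges G (Z i) ∩ cutEdges G (Z (i + 1)) =
      edgesBetween T {v | h v = t} {v | h v = t + 1} := by
  rw [block_eq_level hdisj hrange hmemZ hi (by omega),
    block_eq_level hdisj hrange hmemZ (t := t + 1) (by rw [hi]; push_cast; ring) ht]
  push_cast
  exact edgeSet_inter_cutEdges_inter_cutEdges hTG
    (Set.disjoint_left.mpr fun v h1 h2 => by simp_all)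

lemma edgeSet_inter_cutEdges_pred_eq_empty (hℓ : 3 ≤ ℓ) (hstep : ∀ u v, T.Adj u v → h v ≤ h u + 1) :
    T.edgeSet ∩ cutEdges G (Z g) ∩ cutEdges G (Z (g - 1)) = ∅ := by
  have hg1 : g - 1 = g + ↑(ℓ - 1) := by exact_mod_cast sub_eq_add_natCast_sub (k := 1) (by omega) g
  rw [Set.inter_right_comm,
    block_eq_level hdisj hrange hmemZ (i := g) (t := 0) (by simp) (by omega),
    block_eq_level hdisj hrange hmemZ hg1 (by omega),
    edgeSet_inter_cutEdges_inter_cutEdges hTG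
      (Set.disjoint_left.mpr fun v h1 h2 => by simp_all; omega)]
  refine Set.eq_empty_of_forall_notMem ?_
  rintro e ⟨x, hx, y, hy, hxy, -⟩
  have := hstep y x hxy.symm
  simp only [Set.mem_ofPred_eq] at hx hy
  omega

lemma exists_traversal_of_levels (hT : T.IsTree) (hℓ : 3 ≤ ℓ)
    (hstep : ∀ u v, T.Adj u v → h v ≤ h u + 1) (hne : ∀ i, (Z i).Nonempty)
    (hnc : ∀ i x y, T.Adj x y → ¬ Crossing (Z i) (treeSide T x s(x, y))) :
    ∃ w : ZMod ℓ → V, (∀ i, w i ∈ Z i) ∧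
      (∀ i : ZMod ℓ, i ≠ g → i ≠ g - 1 → i ≠ g - 2 →
        T.edgeSet ∩ cutEdges G (Z i) ∩ cutEdges G (Z (i + 1)) = {s(w i, w (i + 1))}) ∧
      (s(w g, w (g + 1)) ∈ T.edgeSet ∩ cutEdges G (Z g) ∩ cutEdges G (Z (g + 1)) ∧
        ∀ e ∈ T.edgeSet ∩ cutEdges G (Z g) ∩ cutEdges G (Z (g + 1)), w (g + 1) ∈ e) ∧
      (s(w (g - 2), w (g - 1)) ∈
          T.edgeSet ∩ cutEdges G (Z (g - 1)) ∩ cutEdges G (Z (g - 2)) ∧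
        ∀ e ∈ T.edgeSet ∩ cutEdges G (Z (g - 1)) ∩ cutEdges G (Z (g - 2)),
          w (g - 2) ∈ e) ∧
      T.edgeSet ∩ cutEdges G (Z g) ∩ cutEdges G (Z (g - 1)) = ∅ := by
  have : NeZero ℓ := ⟨by omega⟩
  have hZ : ∀ {i : ZMod ℓ} {t : ℕ}, i = g + t → t < ℓ → Z i = {v | h v = t} :=
    block_eq_level hdisj hrange hmemZ
  have hbundle : ∀ {i : ZMod ℓ} {t : ℕ}, i = g + t → t + 1 < ℓ →
      T.edgeSet ∩ cutEdges G (Z i) ∩ cutEdges G (Z (i + 1)) =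
        edgesBetween T {v | h v = t} {v | h v = t + 1} :=
    edgeSet_inter_cutEdges_eq_edgesBetween_level hdisj hrange hmemZ hTG
  obtain ⟨W, hWlev, hmid, hbot, htop⟩ := exists_linear_traversal hT hstep
    (fun k x y => not_crossing_level hdisj hrange hmemZ hnc k) hℓ fun t ht => by
      obtain ⟨v, hv⟩ := hne (g + t)
      exact ⟨v, by rwa [hZ rfl ht] at hv⟩
  have hw : ∀ {i : ZMod ℓ} {t : ℕ}, i = g + t → t < ℓ → W (i - g).val = W t := by
    rintro i t rfl ht
    simp [ZMod.val_cast_of_lt ht]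
  have hg2 : g - 2 = g + ↑(ℓ - 2) := by exact_mod_cast sub_eq_add_natCast_sub (k := 2) (by omega) g
  have hg1 : g - 2 + 1 = g + ↑(ℓ - 1) := by
    rw [← sub_eq_add_natCast_sub (by omega)]
    push_cast
    ring
  refine ⟨fun i => W (i - g).val, fun i => ?_, fun i hi0 hi1 hi2 => ?_, ?_, ?_,
    edgeSet_inter_cutEdges_pred_eq_empty hdisj hrange hmemZ hTG hℓ hstep⟩ <;> dsimp only
  · rw [hZ (by simp) (ZMod.val_lt (i - g))]
    exact hWlev _ (ZMod.val_lt _)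
  · obtain ⟨t, rfl, ht0, ht⟩ := exists_eq_add_natCast_of_ne hi0 hi1 hi2
    rw [hbundle rfl (by omega), hw rfl (by omega), hw (t := t + 1) (by push_cast; ring) (by omega),
      hmid t ht0 ht]
  · rw [hbundle (i := g) (t := 0) (by simp) (by omega), hw (t := 0) (by simp) (by omega),
      hw (t := 1) (by simp) (by omega)]
    exact_mod_cast hbot
  · rw [Set.inter_right_comm, show g - 1 = g - 2 + 1 by ring, hbundle hg2 (by omega),
      hw hg2 (by omega), hw hg1 (by omega)]
    exact htop

end CycleLevels

theorem tree_traversal_of_cycle_cuts_general {V : Type*} (K : ℕ)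
    (G : SimpleGraph V) (hG : KEdgeConnected G K)
    (T : SimpleGraph V) (hTle : T ≤ G) (hTtree : T.IsTree) (hTcong : CongAtMost G T K)
    (ℓ : ℕ) (hℓ : 3 ≤ ℓ) (Z : ZMod ℓ → Set V)
    (hdisj : ∀ i j : ZMod ℓ, i ≠ j → Disjoint (Z i) (Z j))
    (hne : ∀ i : ZMod ℓ, (Z i).Nonempty)
    (hunion : (⋃ i, Z i) = Set.univ)
    (hnc : ∀ i : ZMod ℓ, ∀ Y : Set V, IsKCut G K Y → ¬ Crossing (Z i) Y)
    (hfar : ∀ i i' : ZMod ℓ, i' ≠ i → i' ≠ i + 1 → i' ≠ i - 1 →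
      cutEdges G (Z i) ∩ cutEdges G (Z i') = ∅) :
    ∃ g : ZMod ℓ, ∃ w : ZMod ℓ → V, (∀ i, w i ∈ Z i) ∧
      (∀ i : ZMod ℓ, i ≠ g → i ≠ g - 1 → i ≠ g - 2 →
        T.edgeSet ∩ cutEdges G (Z i) ∩ cutEdges G (Z (i + 1)) = {s(w i, w (i + 1))}) ∧
      (s(w g, w (g + 1)) ∈ T.edgeSet ∩ cutEdges G (Z g) ∩ cutEdges G (Z (g + 1)) ∧
        ∀ e ∈ T.edgeSet ∩ cutEdges G (Z g) ∩ cutEdges G (Z (g + 1)), w (g + 1) ∈ e) ∧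
      (s(w (g - 2), w (g - 1)) ∈
          T.edgeSet ∩ cutEdges G (Z (g - 1)) ∩ cutEdges G (Z (g - 2)) ∧
        ∀ e ∈ T.edgeSet ∩ cutEdges G (Z (g - 1)) ∩ cutEdges G (Z (g - 2)),
          w (g - 2) ∈ e) ∧
      T.edgeSet ∩ cutEdges G (Z g) ∩ cutEdges G (Z (g - 1)) = ∅ := by
  have hncT : ∀ i x y, T.Adj x y → ¬ Crossing (Z i) (treeSide T x s(x, y)) :=
    fun i x y hxy => hnc i _ (isKCut_treeSide hG hTtree hTcong hxy)
  obtain ⟨g, h, hrange, hmemZ, hstep⟩ := exists_levels hTtree hℓ hdisj hncT hunion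
    fun u v huv i j => eq_or_eq_add_one_of_adj hdisj hfar (hTle huv)
  exact ⟨g, exists_traversal_of_levels hdisj hrange hmemZ hTle hTtree hℓ hstep hne hncT⟩

/-- (Lemma: how a congestion-`K` spanning tree traverses the basic
`K`-cuts of a cactus cycle, `K` even.) -/
theorem tree_traversal_of_cycle_cuts {V : Type*} [Fintype V] (K : ℕ) (hKpos : 0 < K)
    (hKeven : Even K) (G : SimpleGraph V) (hG : KEdgeConnected G K)
    (T : SimpleGraph V) (hTle : T ≤ G) (hTtree : T.IsTree) (hTcong : CongAtMost G T K)
    (ℓ : ℕ) (hℓ : 3 ≤ ℓ) (Z : ZMod ℓ → Set V)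
    (hdisj : ∀ i j : ZMod ℓ, i ≠ j → Disjoint (Z i) (Z j))
    (hne : ∀ i : ZMod ℓ, (Z i).Nonempty)
    (hunion : (⋃ i, Z i) = Set.univ)
    (hcuts : ∀ i : ZMod ℓ, IsKCut G K (Z i))
    (hnc : ∀ i : ZMod ℓ, ∀ Y : Set V, IsKCut G K Y → ¬ Crossing (Z i) Y)
    (hhalf : ∀ i : ZMod ℓ, (cutEdges G (Z i) ∩ cutEdges G (Z (i + 1))).ncard = K / 2)
    (hfar : ∀ i i' : ZMod ℓ, i' ≠ i → i' ≠ i + 1 → i' ≠ i - 1 →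
      cutEdges G (Z i) ∩ cutEdges G (Z i') = ∅) :
    ∃ g : ZMod ℓ, ∃ w : ZMod ℓ → V, (∀ i, w i ∈ Z i) ∧
      (∀ i : ZMod ℓ, i ≠ g → i ≠ g - 1 → i ≠ g - 2 →
        T.edgeSet ∩ cutEdges G (Z i) ∩ cutEdges G (Z (i + 1)) = {s(w i, w (i + 1))}) ∧
      (s(w g, w (g + 1)) ∈ T.edgeSet ∩ cutEdges G (Z g) ∩ cutEdges G (Z (g + 1)) ∧
        ∀ e ∈ T.edgeSet ∩ cutEdges G (Z g) ∩ cutEdges G (Z (g + 1)), w (g + 1) ∈ e) ∧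
      (s(w (g - 2), w (g - 1)) ∈
          T.edgeSet ∩ cutEdges G (Z (g - 1)) ∩ cutEdges G (Z (g - 2)) ∧
        ∀ e ∈ T.edgeSet ∩ cutEdges G (Z (g - 1)) ∩ cutEdges G (Z (g - 2)),
          w (g - 2) ∈ e) ∧
      T.edgeSet ∩ cutEdges G (Z g) ∩ cutEdges G (Z (g - 1)) = ∅ :=
  tree_traversal_of_cycle_cuts_general K G hG T hTle hTtree hTcong ℓ hℓ Z hdisj hne hunion hnc hfar
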